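/- arXiv:1401.2689 — 2 statements merged into one kernel-verified Lean document; each statement's English description precedes it below -/
import Mathlib

section
/- For every real x₀ ≥ 2, ∫_{2}^{x₀} θ(t)/(t·(log t)²) dt = π(x₀) − θ(x₀)/log x₀. -/
open Real Finset

/-- The first Chebyshev function `θ(x) = ∑_{p ≤ x} log p`, sum over primes `p ≤ x`. -/
noncomputable def chebyshevTheta (x : ℝ) : ℝ :=
  ∑ p ∈ (Finset.range (⌊x⌋₊ + 1)).filter Nat.Prime, Real.log p

/-- The prime counting function `π(x)`: the number of primes not exceeding `x`. -/
noncomputable def primePi (x : ℝ) : ℝ :=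
  ((Finset.range (⌊x⌋₊ + 1)).filter Nat.Prime).card

theorem chebyshevTheta_eq_theta : chebyshevTheta = Chebyshev.theta := by
  ext x
  rw [chebyshevTheta, Chebyshev.theta_eq_sum_Icc, Nat.range_succ_eq_Icc_zero]

theorem primePi_eq_primeCounting_floor (x : ℝ) : primePi x = Nat.primeCounting ⌊x⌋₊ := by
  rw [primePi, ← Nat.primesLE_card_eq_primeCounting]
  rfl

theorem integral_theta_eq (x₀ : ℝ) (hx₀ : 2 ≤ x₀) :
    ∫ t in (2:ℝ)..x₀, chebyshevTheta t / (t * (Real.log t) ^ 2) =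
      primePi x₀ - chebyshevTheta x₀ / Real.log x₀ := by
  rw [primePi_eq_primeCounting_floor, Chebyshev.primeCounting_eq_theta_div_log_add_integral hx₀,
    chebyshevTheta_eq_theta]
  ring
end

section
/- Let ε₀(t) = √(8/(17π)) · X^{1/2} · e^{−X}, where X = √((log t)/6.455), and let g(t) = t·ε₀(t)/(log t)^{33/20}. Then for all real t ≥ 149, ε₀(t)/(log t)² < g′(t), where g′ denotes the derivative of g. -/
/-!
Logarithmic differentiation, with `X = √(log t / 6.455)` so that `log t = 6.455 X²`, gives
`g'(t) = ε₀(t) (1 - 1/(12.91 X) - 7/(5 log t)) / (log t)^{33/20}`.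
For `t ≥ 149` we have `log t > 5`, so the bracket exceeds `5/8`, while
`(log t)^{-7/20} ≤ 5^{-7/20} < 5/8`; this is exactly `ε₀(t)/(log t)² < g'(t)`.
-/

open Real

/-- `ε₀(t) = √(8/(17π)) · X^{1/2} · e^{−X}` where `X = √((log t)/6.455)`. -/
noncomputable def eps0 (t : ℝ) : ℝ :=
  Real.sqrt (8 / (17 * Real.pi)) * Real.sqrt (Real.sqrt (Real.log t / 6.455))
    * Real.exp (-(Real.sqrt (Real.log t / 6.455)))

/-- `g(t) = t·ε₀(t)/(log t)^{33/20}`. -/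
noncomputable def g (t : ℝ) : ℝ := t * eps0 t / (Real.log t) ^ ((33:ℝ)/20)

theorem HasDerivAt.const_mul_sqrt_mul_exp_neg {f : ℝ → ℝ} {f' x : ℝ} (c : ℝ)
    (hf : HasDerivAt f f' x) (hx : 0 < f x) :
    HasDerivAt (fun y => c * √(f y) * Real.exp (-f y))
      (c * √(f x) * Real.exp (-f x) * (1 / (2 * f x) - 1) * f') x := by
  refine (((hf.sqrt hx.ne').const_mul c).mul hf.neg.exp).congr_deriv ?_
  simp only [Pi.neg_apply]
  field_simp
  rw [sq_sqrt hx.le]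
  ring

theorem hasDerivAt_sqrt_log_div {t c : ℝ} (ht : 1 < t) (hc : 0 < c) :
    HasDerivAt (fun u => √(log u / c)) (1 / (2 * c * t * √(log t / c))) t := by
  convert ((hasDerivAt_log (zero_lt_one.trans ht).ne').div_const c).sqrt
    (div_pos (log_pos ht) hc).ne' using 1
  field_simp

theorem eps0_pos {t : ℝ} (ht : 1 < t) : 0 < eps0 t := by
  have : 0 < log t := log_pos ht
  unfold eps0
  positivity

theorem hasDerivAt_eps0 {t : ℝ} (ht : 1 < t) :
    HasDerivAt eps0
      (eps0 t * (1 / (2 * √(log t / 6.455)) - 1) * (1 / (12.91 * t * √(log t / 6.455)))) t := by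
  have hX : 0 < √(log t / 6.455) := sqrt_pos.mpr (div_pos (log_pos ht) (by norm_num))
  refine ((hasDerivAt_sqrt_log_div ht (by norm_num : (0 : ℝ) < 6.455)).const_mul_sqrt_mul_exp_neg
    √(8 / (17 * π)) hX).congr_deriv ?_
  norm_num [eps0]

noncomputable def gDerivFactor (x : ℝ) : ℝ := 1 - 1 / (12.91 * √(x / 6.455)) - 7 / (5 * x)

theorem hasDerivAt_g {t : ℝ} (ht : 1 < t) :
    HasDerivAt g (eps0 t * gDerivFactor (log t) / log t ^ ((33:ℝ)/20)) t := by
  have hL : 0 < log t := log_pos ht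
  have hP : 0 < log t ^ ((33:ℝ)/20) := by positivity
  have h : HasDerivAt g _ t := ((hasDerivAt_id' t).mul (hasDerivAt_eps0 ht)).div
    ((hasDerivAt_log (zero_lt_one.trans ht).ne').rpow_const (p := (33:ℝ)/20) (Or.inl hL.ne')) hP.ne'
  refine h.congr_deriv ?_
  rw [gDerivFactor, rpow_sub_one hL.ne', Pi.mul_apply]
  generalize log t ^ ((33:ℝ)/20) = P at hP ⊢
  obtain ⟨X, hX, hLX⟩ : ∃ X, 0 < X ∧ √(log t / 6.455) = X := ⟨_, sqrt_pos.mpr (by positivity), rfl⟩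
  have hL' : log t = 6.455 * X ^ 2 := by
    rw [← hLX, sq_sqrt (by positivity)]; ring
  rw [hLX, hL']
  field_simp
  ring

theorem five_lt_log_of_149_le {t : ℝ} (ht : 149 ≤ t) : 5 < log t := by
  rw [lt_log_iff_exp_lt (by linarith)]
  calc exp 5 = exp 1 ^ 5 := by rw [← exp_nat_mul]; norm_num
    _ < 2.7182818286 ^ 5 := by gcongr; exact exp_one_lt_d9
    _ < 149 := by norm_num
    _ ≤ t := ht

theorem five_div_eight_lt_gDerivFactor {x : ℝ} (hx : 5 ≤ x) : 5 / 8 < gDerivFactor x := by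
  have hX : 0.88 ≤ √(x / 6.455) := by
    rw [le_sqrt (by norm_num) (by positivity), le_div_iff₀ (by norm_num)]
    nlinarith
  have h1 : 1 / (12.91 * √(x / 6.455)) ≤ 1 / (12.91 * 0.88) := by gcongr
  have h2 : 7 / (5 * x) ≤ 7 / (5 * 5) := by gcongr
  rw [gDerivFactor]
  norm_num at h1 h2 ⊢
  linarith

theorem rpow_33_div_20_le {x : ℝ} (hx : 5 ≤ x) : x ^ ((33:ℝ)/20) ≤ 5 / 8 * x ^ 2 := by
  have h : 8 / 5 ≤ x ^ ((7:ℝ)/20) := by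
    calc (8 / 5 : ℝ) ≤ 5 ^ ((7:ℝ)/20) := by
          refine le_of_pow_le_pow_left₀ (n := 20) (by norm_num) (by positivity) ?_
          rw [← rpow_natCast (5 ^ _), ← rpow_mul (by norm_num)]
          norm_num
      _ ≤ x ^ ((7:ℝ)/20) := by gcongr
  have hx2 : x ^ 2 = x ^ ((33:ℝ)/20) * x ^ ((7:ℝ)/20) := by
    rw [← rpow_add (by linarith), ← rpow_natCast]; norm_num
  rw [hx2]
  nlinarith [rpow_pos_of_pos (by linarith : 0 < x) ((33:ℝ)/20)]

theorem eps0_lt_deriv_g (t : ℝ) (ht : 149 ≤ t) :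
    eps0 t / (Real.log t) ^ 2 < deriv g t := by
  have hL : 5 < log t := five_lt_log_of_149_le ht
  have ht1 : 1 < t := by linarith
  rw [(hasDerivAt_g ht1).deriv, div_lt_div_iff₀ (by positivity) (by positivity), mul_assoc]
  refine mul_lt_mul_of_pos_left ?_ (eps0_pos ht1)
  calc log t ^ ((33:ℝ)/20) ≤ 5 / 8 * log t ^ 2 := rpow_33_div_20_le hL.le
    _ < _ := by gcongr; exact five_div_eight_lt_gDerivFactor hL.le
end
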